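/- With sentences as an inductive type and G, F defined by mutual structural recursion as in the monotonicity lemma, if U is consistent (no A with A ∈ U and neg A ∈ U), then no sentence belongs to both G(U) and F(U), i.e., G(U) ∩ F(U) = ∅. -/

import Mathlib

inductive Sent : Type
  | atom : Bool → Sent
  | tr : Sent → Sent
  | neg : Sent → Sent
  | disj : Sent → Sent → Sent

def GF (U : Set Sent) : Sent → Prop × Prop
  | Sent.atom b => (b = true, b = false)
  | Sent.tr A => (A ∈ U, Sent.neg A ∈ U)
  | Sent.neg A => ((GF U A).2, (GF U A).1)
  | Sent.disj A B => ((GF U A).1 ∨ (GF U B).1, (GF U A).2 ∧ (GF U B).2)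

def Gset (U : Set Sent) : Set Sent := {A | (GF U A).1}

def Fset (U : Set Sent) : Set Sent := {A | (GF U A).2}

def Consistent (U : Set Sent) : Prop := ¬ ∃ A, A ∈ U ∧ Sent.neg A ∈ U

theorem Consistent.not_GF_fst_and_snd {U : Set Sent} (hU : Consistent U) :
    ∀ A : Sent, ¬ ((GF U A).1 ∧ (GF U A).2)
  | .atom b => by simp [GF]
  | .tr A => fun ⟨hA, hnegA⟩ => hU ⟨A, hA, hnegA⟩
  | .neg A => fun ⟨hF, hG⟩ => hU.not_GF_fst_and_snd A ⟨hG, hF⟩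
  | .disj A B => by
    rintro ⟨hA | hB, hFA, hFB⟩
    · exact hU.not_GF_fst_and_snd A ⟨hA, hFA⟩
    · exact hU.not_GF_fst_and_snd B ⟨hB, hFB⟩

theorem Gset_inter_Fset_empty (U : Set Sent) (hU : Consistent U) :
    Gset U ∩ Fset U = ∅ :=
  Set.eq_empty_of_forall_notMem fun A hA => hU.not_GF_fst_and_snd A hA
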